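/- arXiv:1908.09694 — 2 statements merged into one kernel-verified Lean document; each statement's English description precedes it below -/
import Mathlib

section
/- Let e ≥ 3 be odd. For all integers t ≥ 2 and m ≥ 0, the partition Δ_t ⊔ (1^{2m+1}) has 2-core Δ_{t−2} and twisted 2-quotient τ(Δ_t ⊔ 1^{2m+1}) = |(∅, 1^{t+m}), s_{t−2}⟩. -/
namespace GUnBranching

/-- A partition, given by its (0-indexed) weakly decreasing, eventually zero
sequence of parts: `part k` is the (k+1)-st part `λ_{k+1}`. -/
structure Partition where
  part : ℕ → ℕ
  antitone : ∀ i j : ℕ, i ≤ j → part j ≤ part i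
  eventually_zero : ∃ N : ℕ, ∀ n : ℕ, N ≤ n → part n = 0

namespace Partition

/-- The set of boxes (row, column) (0-indexed) of the Young diagram of a partition. -/
def boxSet (p : Partition) : Set (ℕ × ℕ) := {b | b.2 < p.part b.1}

/-- The size `|λ|` of a partition: the number of boxes of its Young diagram. -/
noncomputable def size (p : Partition) : ℕ := p.boxSet.ncard

/-- The β-set `β(λ) = {λ_k - k + 1 : k ≥ 1}` (0-indexed: `{part k - k : k ∈ ℕ}`). -/
def betaSet (p : Partition) : Set ℤ := {z | ∃ k : ℕ, z = (p.part k : ℤ) - k}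

/-- The charged β-set `{λ_k + s - k + 1 : k ≥ 1}` of `(λ, s)`. -/
def chargedBetaSet (p : Partition) (s : ℤ) : Set ℤ :=
  {z | ∃ k : ℕ, z = (p.part k : ℤ) + s - k}

/-- The number of (nonzero) parts of a partition. -/
noncomputable def length (p : Partition) : ℕ := {k : ℕ | p.part k ≠ 0}.ncard

end Partition

/-- The empty partition `∅`. -/
def emptyPartition : Partition :=
  ⟨fun _ => 0, fun _ _ _ => le_rfl, ⟨0, fun _ _ => rfl⟩⟩

/-- The partition `3^a 2^b 1^c` (a parts equal to 3, b parts equal to 2, c parts equal to 1). -/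
def threeTwoOne (a b c : ℕ) : Partition where
  part k := if k < a then 3 else if k < a + b then 2 else if k < a + b + c then 1 else 0
  antitone i j h := by (try dsimp only); split_ifs <;> omega
  eventually_zero := ⟨a + b + c, fun n hn => by (try dsimp only); split_ifs <;> omega⟩

/-- The column partition `1^m`. -/
def column (m : ℕ) : Partition := threeTwoOne 0 0 m

/-- The staircase partition `Δ_t = (t, t-1, …, 2, 1)`. -/
def staircase (t : ℕ) : Partition where
  part k := t - k
  antitone i j h := Nat.sub_le_sub_left h t
  eventually_zero := ⟨t, fun n hn => Nat.sub_eq_zero_of_le hn⟩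

/-- The partition `Δ_t ⊔ 1^r` (staircase with a column of `r` extra parts equal to 1). -/
def staircaseColumn (t r : ℕ) : Partition where
  part k := if k < t then t - k else if k < t + r then 1 else 0
  antitone i j h := by (try dsimp only); split_ifs <;> omega
  eventually_zero := ⟨t + r, fun n hn => by (try dsimp only); split_ifs <;> omega⟩

/-- `p ⊔ 1^r` : append `r` extra parts equal to 1 to the partition `p`. -/
noncomputable def appendOnes (p : Partition) (r : ℕ) : Partition where
  part k := max (p.part k) (if k < p.length + r then 1 else 0)
  antitone i j h := max_le_max (p.antitone i j h) (by split_ifs <;> omega)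
  eventually_zero := by
    obtain ⟨N, hN⟩ := p.eventually_zero
    refine ⟨max N (p.length + r), fun n hn => ?_⟩
    have h1 : p.part n = 0 := hN n (le_trans (le_max_left _ _) hn)
    have h2 : ¬ n < p.length + r := by
      have := le_trans (le_max_right N (p.length + r)) hn
      omega
    simp [h1, h2]

/-- `mu` is obtained from `lam` by removing one rim `e`-hook: on β-sets, a bead `x`
with an empty spot at `x - e` is moved to `x - e`. -/
def RemoveHook (e : ℕ) (lam mu : Partition) : Prop :=
  ∃ x : ℤ, x ∈ lam.betaSet ∧ (x - e) ∉ lam.betaSet ∧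
    mu.betaSet = insert (x - e) (lam.betaSet \ {x})

/-- A partition is an `e`-core if no rim `e`-hook can be removed from it. -/
def IsECore (e : ℕ) (p : Partition) : Prop := ∀ mu : Partition, ¬ RemoveHook e p mu

/-- `core` is the `e`-core of `lam`: it is obtained from `lam` by repeatedly removing
rim `e`-hooks, and no further rim `e`-hook can be removed. -/
def HasECore (e : ℕ) (lam core : Partition) : Prop :=
  Relation.ReflTransGen (RemoveHook e) lam core ∧ IsECore e core

/-- `lam` and `mu` have the same `e`-core. -/
def SameECore (e : ℕ) (lam mu : Partition) : Prop :=
  ∃ core : Partition, HasECore e lam core ∧ HasECore e mu core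

/-- `(q1, q2)` is the 2-quotient of `lam`: the odd (resp. even) β-numbers of `lam`,
transformed by `v ↦ (v+1)/2` (resp. `v ↦ v/2`), form the β-set of `q1` (resp. `q2`)
for a suitable charge. -/
def IsTwoQuotient (lam q1 q2 : Partition) : Prop :=
  (∃ c : ℤ, q1.chargedBetaSet c = {z : ℤ | 2 * z - 1 ∈ lam.betaSet}) ∧
  (∃ c : ℤ, q2.chargedBetaSet c = {z : ℤ | 2 * z ∈ lam.betaSet})

/-- The charge `s_t`: `(-(t+1+e)/2, t/2)` for even `t`, `(-(t+1)/2, (t+e)/2)` for odd `t`. -/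
def tauCharge (e t : ℕ) : ℤ × ℤ :=
  if t % 2 = 0 then (-(((t : ℤ) + 1 + e) / 2), (t : ℤ) / 2)
  else (-(((t : ℤ) + 1) / 2), ((t : ℤ) + e) / 2)

/-- `bp` is the twisted 2-quotient `τ(lam)` of `lam`, a partition with 2-core `Δ_t`:
it is the 2-quotient for even `t` and the swapped 2-quotient for odd `t`; the
corresponding charge is `tauCharge e t`. -/
def IsTwistedQuotient (t : ℕ) (lam : Partition) (bp : Partition × Partition) : Prop :=
  HasECore 2 lam (staircase t) ∧
  (if t % 2 = 0 then IsTwoQuotient lam bp.1 bp.2 else IsTwoQuotient lam bp.2 bp.1)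

/-- The abacus of a charged bipartition: positions are (column, row) where row
`0 : Fin 2` is the bottom row (first component, charge `s.1`) and row `1 : Fin 2`
the top row (second component, charge `s.2`). -/
def abacus (bp : Partition × Partition) (s : ℤ × ℤ) : Set (ℤ × Fin 2) :=
  {b | b.1 ∈ (if b.2 = (0 : Fin 2) then bp.1.chargedBetaSet s.1 else bp.2.chargedBetaSet s.2)}

/-- `P` is an `e`-period of the abacus `A`: beads `(x, r 0), (x-1, r 1), …, (x-e+1, r (e-1))`
of `A` where `x` is the largest column containing a bead of `A`, `r i = 0` (bottom row)
whenever `(x - i, bottom)` is a bead of `A` (for `i < e-1`), and once in the bottom row the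
period stays in the bottom row. -/
def IsEPeriodOf (e : ℕ) (A P : Set (ℤ × Fin 2)) : Prop :=
  ∃ (x : ℤ) (r : ℕ → Fin 2),
    P = {b | ∃ i : ℕ, i < e ∧ b = ((x - i : ℤ), r i)} ∧
    (∀ i : ℕ, i < e → ((x - i : ℤ), r i) ∈ A) ∧
    (∀ b ∈ A, b.1 ≤ x) ∧
    (∀ i : ℕ, i + 1 < e → ((x - i : ℤ), (0 : Fin 2)) ∈ A → r i = 0) ∧
    (∀ i : ℕ, i + 1 < e → r i = 0 → r (i + 1) = 0)

/-- `P 0, P 1, P 2, …` is the sequence of `e`-periods of `A`: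
each `P k` is the `e`-period of `A` minus the previous periods. -/
def IsPeriodSeq (e : ℕ) (A : Set (ℤ × Fin 2)) (P : ℕ → Set (ℤ × Fin 2)) : Prop :=
  ∀ k : ℕ, IsEPeriodOf e (A \ ⋃ i ∈ Finset.range k, P i) (P k)

/-- The abacus `A` is totally `e`-periodic: the `k`-th `e`-period exists for every `k`. -/
def TotallyPeriodic (e : ℕ) (A : Set (ℤ × Fin 2)) : Prop :=
  ∃ P : ℕ → Set (ℤ × Fin 2), IsPeriodSeq e A P

/-- `P` is the `(k+1)`-st `e`-period of `A` (so `k = 0` gives the first `e`-period). -/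
def IsKthPeriod (e : ℕ) (A : Set (ℤ × Fin 2)) (k : ℕ) (P : Set (ℤ × Fin 2)) : Prop :=
  ∃ Q : ℕ → Set (ℤ × Fin 2),
    (∀ i : ℕ, i ≤ k → IsEPeriodOf e (A \ ⋃ j ∈ Finset.range i, Q j) (Q i)) ∧ Q k = P

/-- Shift a set of abacus positions one step to the right. -/
def shiftRight (P : Set (ℤ × Fin 2)) : Set (ℤ × Fin 2) := {b | (b.1 - 1, b.2) ∈ P}

/-- Edge of the `sl_∞`-crystal moving the `(k+1)`-st `e`-period one step to the right:
the shifted period must again be the `(k+1)`-st `e`-period of the resulting abacus. -/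
def SlInfEdgeAt (e : ℕ) (s : ℤ × ℤ) (k : ℕ) (lam mu : Partition × Partition) : Prop :=
  TotallyPeriodic e (abacus lam s) ∧ TotallyPeriodic e (abacus mu s) ∧
  ∃ P : Set (ℤ × Fin 2),
    IsKthPeriod e (abacus lam s) k P ∧
    abacus mu s = (abacus lam s \ P) ∪ shiftRight P ∧
    IsKthPeriod e (abacus mu s) k (shiftRight P)

/-- Edge of the `sl_∞`-crystal. -/
def SlInfEdge (e : ℕ) (s : ℤ × ℤ) (lam mu : Partition × Partition) : Prop :=
  ∃ k : ℕ, SlInfEdgeAt e s k lam mu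

/-- A source vertex of the `sl_∞`-crystal: a vertex (totally `e`-periodic abacus)
with no incoming edge. -/
def IsSlInfSource (e : ℕ) (s : ℤ × ℤ) (bp : Partition × Partition) : Prop :=
  TotallyPeriodic e (abacus bp s) ∧ ∀ lam : Partition × Partition, ¬ SlInfEdge e s lam bp

/-- A box of a bipartition: (component, row, column), all 0-indexed
(component `0 : Fin 2` is the first component `λ¹`). -/
abbrev Box := Fin 2 × ℕ × ℕ

/-- The component of a bipartition indexed by `j : Fin 2`. -/
def comp (bp : Partition × Partition) (j : Fin 2) : Partition :=
  if j = 0 then bp.1 else bp.2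

/-- `b` is a box of the bipartition `bp`. -/
def IsBoxOf (bp : Partition × Partition) (b : Box) : Prop :=
  b.2.2 < (comp bp b.1).part b.2.1

/-- The (charged) content `ct(b) = y - x + s_j` of a box `b = (j, x, y)`. -/
def content (s : ℤ × ℤ) (b : Box) : ℤ :=
  (b.2.2 : ℤ) - (b.2.1 : ℤ) + (if b.1 = 0 then s.1 else s.2)

/-- `b` is an addable box of the bipartition `bp`. -/
def IsAddable (bp : Partition × Partition) (b : Box) : Prop :=
  b.2.2 = (comp bp b.1).part b.2.1 ∧
  (b.2.1 = 0 ∨ (comp bp b.1).part b.2.1 < (comp bp b.1).part (b.2.1 - 1))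

/-- `b` is a removable box of the bipartition `bp`. -/
def IsRemovable (bp : Partition × Partition) (b : Box) : Prop :=
  b.2.2 + 1 = (comp bp b.1).part b.2.1 ∧
  (comp bp b.1).part (b.2.1 + 1) < (comp bp b.1).part b.2.1

/-- The total order on addable/removable boxes: `b ≤ b'` iff `b = b'`, or
`ct(b) < ct(b')`, or the contents are equal, `b` lies in the second component and
`b'` in the first. -/
def boxLE (s : ℤ × ℤ) (b b' : Box) : Prop :=
  b = b' ∨ content s b < content s b' ∨
    (content s b = content s b' ∧ b.1 = 1 ∧ b'.1 = 0)

/-- The set of addable or removable boxes of residue `i` (the letters of the `i`-word). -/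
def IWord (e : ℕ) (s : ℤ × ℤ) (bp : Partition × Partition) (i : ZMod e) : Set Box :=
  {b | (IsAddable bp b ∨ IsRemovable bp b) ∧ ((content s b : ZMod e) = i)}

/-- A removable box of residue `i` surviving the Kashiwara cancellation: reading the
`i`-word in increasing order and cancelling each removable box with a following addable
box (recursively cancelling adjacent removable-addable pairs), `b` is not cancelled.
Equivalently, every final segment of the `i`-word starting at `b` contains strictly
more removable than addable boxes. -/
def SurvivingRemovable (e : ℕ) (s : ℤ × ℤ) (bp : Partition × Partition)
    (i : ZMod e) (b : Box) : Prop :=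
  b ∈ IWord e s bp i ∧ IsRemovable bp b ∧
  ∀ c ∈ IWord e s bp i, boxLE s b c →
    {d : Box | d ∈ IWord e s bp i ∧ IsAddable bp d ∧ boxLE s b d ∧ boxLE s d c}.ncard <
    {d : Box | d ∈ IWord e s bp i ∧ IsRemovable bp d ∧ boxLE s b d ∧ boxLE s d c}.ncard

/-- The good removable `i`-box: the smallest removable `i`-box surviving the
Kashiwara cancellation. -/
def IsGoodRemovable (e : ℕ) (s : ℤ × ℤ) (bp : Partition × Partition)
    (i : ZMod e) (b : Box) : Prop :=
  SurvivingRemovable e s bp i b ∧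
  ∀ b' : Box, SurvivingRemovable e s bp i b' → boxLE s b b'

/-- An addable box of residue `i` surviving the Kashiwara cancellation. -/
def SurvivingAddable (e : ℕ) (s : ℤ × ℤ) (bp : Partition × Partition)
    (i : ZMod e) (b : Box) : Prop :=
  b ∈ IWord e s bp i ∧ IsAddable bp b ∧
  ∀ c ∈ IWord e s bp i, boxLE s c b →
    {d : Box | d ∈ IWord e s bp i ∧ IsRemovable bp d ∧ boxLE s c d ∧ boxLE s d b}.ncard <
    {d : Box | d ∈ IWord e s bp i ∧ IsAddable bp d ∧ boxLE s c d ∧ boxLE s d b}.ncard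

/-- The good addable `i`-box: the largest addable `i`-box surviving the
Kashiwara cancellation. -/
def IsGoodAddable (e : ℕ) (s : ℤ × ℤ) (bp : Partition × Partition)
    (i : ZMod e) (b : Box) : Prop :=
  SurvivingAddable e s bp i b ∧
  ∀ b' : Box, SurvivingAddable e s bp i b' → boxLE s b' b

/-- A source vertex of the `ŝl_e`-crystal: no good removable `i`-box for any residue `i`. -/
def IsSlESource (e : ℕ) (s : ℤ × ℤ) (bp : Partition × Partition) : Prop :=
  ∀ (i : ZMod e) (b : Box), ¬ IsGoodRemovable e s bp i b

/-- `bp'` is obtained from `bp` by adding the box `b`. -/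
def AddBox (bp : Partition × Partition) (b : Box) (bp' : Partition × Partition) : Prop :=
  if b.1 = 0 then
    bp'.2 = bp.2 ∧ bp'.1.part = Function.update bp.1.part b.2.1 (bp.1.part b.2.1 + 1)
  else
    bp'.1 = bp.1 ∧ bp'.2.part = Function.update bp.2.part b.2.1 (bp.2.part b.2.1 + 1)

/-- Dominance order: `Dominates mu la` means `la ⊴ mu`. -/
def Dominates (mu la : Partition) : Prop :=
  ∀ k : ℕ, ∑ i ∈ Finset.range k, la.part i ≤ ∑ i ∈ Finset.range k, mu.part i
/-!
On the 2-abacus, the β-set of `Δ_t ⊔ 1^{2m+1}` is the set `staircaseRunners t` (all positions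
`z ≤ 1 - t` and all `z ≤ t` of the parity of `t`) with a single gap, at `-t - 2m`.
Removing a domino moves the bead just above the gap down into it, so the gap climbs by `2`;
after `t + m` such moves it sits at `t`, and what is left is the β-set of `Δ_{t-2}`, which is
closed under `z ↦ z - 2` and hence a 2-core. In `Δ_t ⊔ 1^{2m+1}` the runner of the parity of `t`
carries the one gap and the other runner none: halved, they are β-sets of `1^{t+m}` and of `∅`.
-/

theorem removeHook_of_betaSet_eq_diff {e : ℕ} (he : e ≠ 0) {S : Set ℤ} {x : ℤ}
    {lam mu : Partition} (hx : x ∈ S) (hxe : x - e ∈ S)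
    (hlam : lam.betaSet = S \ {x - e}) (hmu : mu.betaSet = S \ {x}) :
    RemoveHook e lam mu := by
  have hne : x ≠ x - e := by omega
  refine ⟨x, by simp [hlam, hx, hne], by simp [hlam], ?_⟩
  rw [hlam, hmu, Set.sdiff_sdiff_comm, Set.insert_sdiff_singleton,
    Set.insert_eq_of_mem (Set.mem_sdiff_singleton.2 ⟨hxe, hne.symm⟩)]

theorem isECore_of_sub_mem_betaSet {e : ℕ} {p : Partition}
    (h : ∀ z ∈ p.betaSet, z - e ∈ p.betaSet) : IsECore e p :=
  fun _ ⟨x, hx, hxe, _⟩ => hxe (h x hx)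

theorem chargedBetaSet_emptyPartition (c : ℤ) : emptyPartition.chargedBetaSet c = Set.Iic c := by
  ext z
  simp only [Partition.chargedBetaSet, emptyPartition, Set.mem_ofPred_eq, Set.mem_Iic]
  exact ⟨by rintro ⟨k, rfl⟩; omega, fun h => ⟨(c - z).toNat, by omega⟩⟩

theorem chargedBetaSet_column (n : ℕ) (c : ℤ) :
    (column n).chargedBetaSet c = Set.Iic (c + 1) \ {c + 1 - n} := by
  ext z
  simp only [Partition.chargedBetaSet, column, threeTwoOne, Set.mem_ofPred_eq, Set.mem_sdiff,
    Set.mem_Iic, Set.mem_singleton_iff]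
  constructor
  · rintro ⟨k, rfl⟩
    split_ifs <;> omega
  · rintro ⟨hz, hzn⟩
    by_cases hcol : c + 1 - n < z
    · exact ⟨(c + 1 - z).toNat, by split_ifs <;> omega⟩
    · exact ⟨(c - z).toNat, by split_ifs <;> omega⟩

def staircaseRunners (t : ℕ) : Set ℤ := {z | z ≤ 1 - t ∨ (z ≤ t ∧ ((t : ℤ) - z) % 2 = 0)}

theorem removeHook_two_of_gap {t : ℕ} {g g' : ℤ} {lam mu : Partition} (hg' : g' = g + 2)
    (hg : g' ≤ t) (hpar : ((t : ℤ) - g) % 2 = 0) (hlam : lam.betaSet = staircaseRunners t \ {g})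
    (hmu : mu.betaSet = staircaseRunners t \ {g'}) : RemoveHook 2 lam mu := by
  subst hg'
  exact removeHook_of_betaSet_eq_diff two_ne_zero
    (by simp only [staircaseRunners, Set.mem_ofPred_eq]; omega)
    (by simp only [staircaseRunners, Set.mem_ofPred_eq]; omega) (by simpa using hlam) hmu

theorem betaSet_staircaseColumn (t m : ℕ) :
    (staircaseColumn t (2 * m + 1)).betaSet = staircaseRunners t \ {-(t : ℤ) - 2 * m} := by
  ext z
  simp only [Partition.betaSet, staircaseColumn, staircaseRunners, Set.mem_ofPred_eq,
    Set.mem_sdiff, Set.mem_singleton_iff]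
  constructor
  · rintro ⟨k, rfl⟩
    split_ifs <;> omega
  · rintro ⟨hz, hgap⟩
    by_cases hstair : 2 - (t : ℤ) ≤ z
    · exact ⟨((t - z) / 2).toNat, by split_ifs <;> omega⟩
    by_cases hcol : -(t : ℤ) - 2 * m < z
    · exact ⟨(1 - z).toNat, by split_ifs <;> omega⟩
    · exact ⟨(-z).toNat, by split_ifs <;> omega⟩

/-- `Δ_t` with its parts `j + 1` and `j` deleted: `(t, …, j + 2, j - 1, …, 1)`. -/
def staircaseSkip (t j : ℕ) : Partition where
  part k := if k < t - 1 - j then t - k else if k < t - 2 then t - 2 - k else 0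
  antitone _ _ _ := by split_ifs <;> omega
  eventually_zero := ⟨t, fun _ _ => by split_ifs <;> omega⟩

theorem betaSet_staircaseSkip {t j : ℕ} (hj : j + 1 ≤ t) :
    (staircaseSkip t j).betaSet = staircaseRunners t \ {2 * (j : ℤ) + 2 - t} := by
  ext z
  simp only [Partition.betaSet, staircaseSkip, staircaseRunners, Set.mem_ofPred_eq,
    Set.mem_sdiff, Set.mem_singleton_iff]
  constructor
  · rintro ⟨k, rfl⟩
    split_ifs <;> omega
  · rintro ⟨hz, hgap⟩
    by_cases hupper : 2 * (j : ℤ) + 2 - t < z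
    · exact ⟨((t - z) / 2).toNat, by split_ifs <;> omega⟩
    by_cases hlower : 2 - (t : ℤ) ≤ z
    · exact ⟨((t - 2 - z) / 2).toNat, by split_ifs <;> omega⟩
    · exact ⟨(-z).toNat, by split_ifs <;> omega⟩

theorem betaSet_staircase (s : ℕ) :
    (staircase s).betaSet = staircaseRunners (s + 2) \ {((s + 2 : ℕ) : ℤ)} := by
  ext z
  simp only [Partition.betaSet, staircase, staircaseRunners, Set.mem_ofPred_eq,
    Set.mem_sdiff, Set.mem_singleton_iff]
  push_cast
  constructor
  · rintro ⟨k, rfl⟩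
    omega
  · rintro ⟨hz, hgap⟩
    by_cases hstair : -(s : ℤ) < z
    · exact ⟨((s - z) / 2).toNat, by omega⟩
    · exact ⟨(-z).toNat, by omega⟩

theorem isECore_two_staircase (s : ℕ) : IsECore 2 (staircase s) :=
  isECore_of_sub_mem_betaSet fun z hz => by
    simp only [betaSet_staircase, staircaseRunners, Set.mem_sdiff, Set.mem_ofPred_eq,
      Set.mem_singleton_iff] at hz ⊢
    omega

theorem reflTransGen_removeHook_staircaseColumn (t n : ℕ) :
    Relation.ReflTransGen (RemoveHook 2) (staircaseColumn t (2 * n + 1)) (staircaseColumn t 1) := by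
  induction n with
  | zero => rfl
  | succ n ih =>
    refine .head (removeHook_two_of_gap ?_ ?_ ?_ (betaSet_staircaseColumn t (n + 1))
      (betaSet_staircaseColumn t n)) ih
    all_goals push_cast; omega

theorem reflTransGen_removeHook_staircaseSkip {t j : ℕ} (hj : j + 1 ≤ t) :
    Relation.ReflTransGen (RemoveHook 2) (staircaseSkip t 0) (staircaseSkip t j) := by
  induction j with
  | zero => rfl
  | succ j ih =>
    refine .tail (ih (by omega)) (removeHook_two_of_gap ?_ ?_ ?_
      (betaSet_staircaseSkip (by omega)) (betaSet_staircaseSkip hj))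
    all_goals push_cast; omega

theorem reflTransGen_removeHook_staircaseColumn_staircase {t : ℕ} (ht : 2 ≤ t) (m : ℕ) :
    Relation.ReflTransGen (RemoveHook 2) (staircaseColumn t (2 * m + 1)) (staircase (t - 2)) := by
  obtain ⟨s, rfl⟩ := Nat.exists_eq_add_of_le' ht
  have hfirst : RemoveHook 2 (staircaseColumn (s + 2) 1) (staircaseSkip (s + 2) 0) :=
    removeHook_two_of_gap (by push_cast; omega) (by push_cast; omega) (by push_cast; omega)
      (betaSet_staircaseColumn _ 0) (betaSet_staircaseSkip (by omega))
  have hlast : RemoveHook 2 (staircaseSkip (s + 2) s) (staircase s) :=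
    removeHook_two_of_gap (by push_cast; omega) (by push_cast; omega) (by push_cast; omega)
      (betaSet_staircaseSkip (by omega)) (betaSet_staircase s)
  simpa using (reflTransGen_removeHook_staircaseColumn _ m).trans
    (.head hfirst ((reflTransGen_removeHook_staircaseSkip (by omega)).tail hlast))

theorem isTwoQuotient_staircaseColumn_of_even {t : ℕ} (ht : t % 2 = 0) (m : ℕ) :
    IsTwoQuotient (staircaseColumn t (2 * m + 1)) emptyPartition (column (t + m)) := by
  simp only [IsTwoQuotient, betaSet_staircaseColumn, chargedBetaSet_emptyPartition,
    chargedBetaSet_column]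
  refine ⟨⟨1 - (t : ℤ) / 2, ?_⟩, ⟨(t : ℤ) / 2 - 1, ?_⟩⟩ <;>
  · ext z
    simp only [staircaseRunners, Set.mem_Iic, Set.mem_sdiff,
      Set.mem_ofPred_eq, Set.mem_singleton_iff]
    push_cast
    omega

theorem isTwoQuotient_staircaseColumn_of_odd {t : ℕ} (ht : t % 2 = 1) (m : ℕ) :
    IsTwoQuotient (staircaseColumn t (2 * m + 1)) (column (t + m)) emptyPartition := by
  simp only [IsTwoQuotient, betaSet_staircaseColumn, chargedBetaSet_emptyPartition,
    chargedBetaSet_column]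
  refine ⟨⟨((t : ℤ) - 1) / 2, ?_⟩, ⟨-(((t : ℤ) - 1) / 2), ?_⟩⟩ <;>
  · ext z
    simp only [staircaseRunners, Set.mem_Iic, Set.mem_sdiff,
      Set.mem_ofPred_eq, Set.mem_singleton_iff]
    push_cast
    omega

theorem twisted_quotient_staircase_odd_column_general
    (t m : ℕ) (ht : 2 ≤ t) :
    IsTwistedQuotient (t - 2) (staircaseColumn t (2 * m + 1))
      (emptyPartition, column (t + m)) := by
  refine ⟨⟨reflTransGen_removeHook_staircaseColumn_staircase ht m, isECore_two_staircase _⟩, ?_⟩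
  split_ifs with hpar
  · exact isTwoQuotient_staircaseColumn_of_even (by omega) m
  · exact isTwoQuotient_staircaseColumn_of_odd (by omega) m

/-- For `t ≥ 2`, `m ≥ 0`, the partition `Δ_t ⊔ 1^{2m+1}` has 2-core
`Δ_{t-2}` and twisted 2-quotient `τ(Δ_t ⊔ 1^{2m+1}) = |(∅, 1^{t+m}), s_{t-2}⟩`. -/
theorem twisted_quotient_staircase_odd_column
    (e t m : ℕ) (he : Odd e) (he3 : 3 ≤ e) (ht : 2 ≤ t) :
    IsTwistedQuotient (t - 2) (staircaseColumn t (2 * m + 1))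
      (emptyPartition, column (t + m)) :=
  twisted_quotient_staircase_odd_column_general t m ht

end GUnBranching
end

section
/- Let e ≥ 3 be odd and let m be a positive multiple of e. For every integer 0 ≤ j ≤ m, the e-core of the partition 2^j ⊔ 1^{2m−2j} (the partition with j parts equal to 2 and 2m−2j parts equal to 1) is the empty partition if and only if j ≡ 0 or 1 (mod e). -/
namespace GUnBranching

/-! Removing an `e`-hook slides a bead of the abacus one step down its runner (from `x` to
`x - e`). Hence, for every runner, the number of beads at positions `≥ L` is unchanged along any
sequence of hook removals as soon as `L` is small enough. The β-set of `2^j 1^{2m-2j}` is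
`{z ≤ 2}` minus the gaps `2 - j` and `1 - j - (2m - 2j) ≡ 1 + j (mod e)`, while that of `∅` is
`{z ≤ 0}`; on the runner of residue `1` the former has the extra bead `1`, compensated by a gap
only when `j ≡ 1` or `j ≡ 0 (mod e)`. Conversely, for such `j`, sliding the beads of both
columns down by multiples of `e` (and, for `j ≡ 1`, the bead `2` to `2 - e`) reaches `∅`. -/

theorem _root_.Set.ncard_insert_sdiff_singleton_inter {α : Type*} {S C : Set α} {x y : α}
    (hS : (S ∩ C).Finite) (hx : x ∈ S) (hy : y ∉ S) (hxy : x ∈ C ↔ y ∈ C) :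
    (insert y (S \ {x}) ∩ C).ncard = (S ∩ C).ncard := by
  by_cases hxC : x ∈ C
  · rw [Set.insert_inter_of_mem (hxy.1 hxC), Set.sdiff_inter_right_comm,
      Set.ncard_insert_of_notMem (fun h => hy h.1.1) hS.sdiff]
    exact Set.ncard_sdiff_singleton_add_one ⟨hx, hxC⟩ hS
  · rw [Set.insert_inter_of_notMem (mt hxy.2 hxC), Set.sdiff_inter_right_comm,
      Set.sdiff_singleton_eq_self (fun h => hxC h.2)]

theorem Partition.ext {p q : Partition} (h : p.part = q.part) : p = q := by
  cases p; cases q; simpa using h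

theorem Partition.finite_betaSet_inter_Ici (p : Partition) (L : ℤ) :
    (p.betaSet ∩ Set.Ici L).Finite :=
  (Set.finite_Icc L (p.part 0)).subset <| by
    rintro _ ⟨⟨k, rfl⟩, hL⟩
    have := p.antitone 0 k k.zero_le
    exact ⟨hL, by omega⟩

theorem betaSet_emptyPartition : emptyPartition.betaSet = {z : ℤ | z ≤ 0} := by
  ext z
  simp only [Partition.betaSet, emptyPartition, Set.mem_ofPred_eq]
  exact ⟨by rintro ⟨k, rfl⟩; omega, fun h => ⟨(-z).toNat, by omega⟩⟩

theorem betaSet_threeTwoOne (b c : ℕ) :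
    (threeTwoOne 0 b c).betaSet = {z : ℤ | z ≤ 2 ∧ z ≠ 2 - b ∧ z ≠ 1 - b - c} := by
  ext z
  simp only [Partition.betaSet, threeTwoOne, Set.mem_ofPred_eq]
  constructor
  · rintro ⟨k, rfl⟩
    split_ifs <;> omega
  · rintro ⟨h1, h2, h3⟩
    refine ⟨if 3 - (b : ℤ) ≤ z then (2 - z).toNat
      else if 2 - (b : ℤ) - c ≤ z then (1 - z).toNat else (-z).toNat, ?_⟩
    split_ifs <;> omega

theorem threeTwoOne_zero_zero_zero : threeTwoOne 0 0 0 = emptyPartition :=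
  Partition.ext <| funext fun k => by simp [threeTwoOne, emptyPartition]

theorem isECore_emptyPartition (e : ℕ) : IsECore e emptyPartition := by
  rintro mu ⟨x, hx, hxe, -⟩
  simp only [betaSet_emptyPartition, Set.mem_ofPred_eq] at hx hxe
  omega

section HookMoves

variable {e : ℕ}

theorem removeHook_threeTwoOne_upper (he : 0 < e) (b c : ℕ) :
    RemoveHook e (threeTwoOne 0 (b + e) c) (threeTwoOne 0 b (c + e)) := by
  refine ⟨2 - b, ?_, ?_, ?_⟩ <;>
    simp only [betaSet_threeTwoOne, Set.ext_iff, Set.mem_ofPred_eq, Set.mem_insert_iff,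
      Set.mem_sdiff, Set.mem_singleton_iff] <;> push_cast <;> omega

theorem removeHook_threeTwoOne_lower (he : 0 < e) (b c : ℕ) :
    RemoveHook e (threeTwoOne 0 b (c + e)) (threeTwoOne 0 b c) := by
  refine ⟨1 - b - c, ?_, ?_, ?_⟩ <;>
    simp only [betaSet_threeTwoOne, Set.ext_iff, Set.mem_ofPred_eq, Set.mem_insert_iff,
      Set.mem_sdiff, Set.mem_singleton_iff] <;> push_cast <;> omega

theorem removeHook_threeTwoOne_one (c : ℕ) :
    RemoveHook (c + 2) (threeTwoOne 0 1 c) emptyPartition := by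
  refine ⟨2, ?_, ?_, ?_⟩ <;>
    simp only [betaSet_threeTwoOne, betaSet_emptyPartition, Set.ext_iff, Set.mem_ofPred_eq,
      Set.mem_insert_iff, Set.mem_sdiff, Set.mem_singleton_iff] <;> push_cast [true_and] <;> omega

theorem reflTransGen_removeHook_threeTwoOne_upper (he : 0 < e) (b c k : ℕ) :
    Relation.ReflTransGen (RemoveHook e)
      (threeTwoOne 0 (b + e * k) c) (threeTwoOne 0 b (c + e * k)) := by
  induction k generalizing c with
  | zero => rfl
  | succ k ih =>
    rw [mul_add_one, ← add_assoc, ← add_assoc, add_right_comm c]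
    exact .head (removeHook_threeTwoOne_upper he _ c) (ih (c + e))

theorem reflTransGen_removeHook_threeTwoOne_lower (he : 0 < e) (b c k : ℕ) :
    Relation.ReflTransGen (RemoveHook e) (threeTwoOne 0 b (c + e * k)) (threeTwoOne 0 b c) := by
  induction k with
  | zero => rfl
  | succ k ih =>
    rw [mul_add_one, ← add_assoc]
    exact .head (removeHook_threeTwoOne_lower he b _) ih

theorem reflTransGen_removeHook_threeTwoOne (he : 0 < e) (b c k l : ℕ) :
    Relation.ReflTransGen (RemoveHook e)
      (threeTwoOne 0 (b + e * k) (c + e * l)) (threeTwoOne 0 b c) := by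
  have hlower := reflTransGen_removeHook_threeTwoOne_lower he b c (l + k)
  rw [mul_add, ← add_assoc] at hlower
  exact (reflTransGen_removeHook_threeTwoOne_upper he b _ k).trans hlower

end HookMoves

noncomputable def beadCount (e : ℕ) (r : ZMod e) (p : Partition) (L : ℤ) : ℕ :=
  (p.betaSet ∩ {z : ℤ | L ≤ z ∧ (z : ZMod e) = r}).ncard

theorem RemoveHook.beadCount_eventuallyEq {e : ℕ} {lam mu : Partition}
    (h : RemoveHook e lam mu) (r : ZMod e) :
    beadCount e r lam =ᶠ[Filter.atBot] beadCount e r mu := by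
  obtain ⟨x, hx, hxe, hmu⟩ := h
  filter_upwards [Filter.eventually_le_atBot (x - e)] with L hL
  have hres : ((x - e : ℤ) : ZMod e) = x := by simp
  refine (Set.ncard_insert_sdiff_singleton_inter ?_ hx hxe ?_).symm.trans (by rw [beadCount, hmu])
  · exact (lam.finite_betaSet_inter_Ici L).subset (Set.inter_subset_inter_right _ fun z hz => hz.1)
  · simp only [Set.mem_ofPred_eq, hres]
    constructor <;> rintro ⟨-, h⟩ <;> exact ⟨by omega, h⟩

theorem beadCount_eventuallyEq_of_reflTransGen {e : ℕ} {lam mu : Partition}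
    (h : Relation.ReflTransGen (RemoveHook e) lam mu) (r : ZMod e) :
    beadCount e r lam =ᶠ[Filter.atBot] beadCount e r mu := by
  induction h with
  | refl => rfl
  | tail _ hstep ih => exact ih.trans (hstep.beadCount_eventuallyEq r)

theorem beadCount_one_threeTwoOne {e b c : ℕ} {L : ℤ} (hL : L ≤ 1) (h2 : (2 : ZMod e) ≠ 1)
    (hb : ((2 - b : ℤ) : ZMod e) ≠ 1) (hc : ((1 - b - c : ℤ) : ZMod e) ≠ 1) :
    beadCount e 1 (threeTwoOne 0 b c) L = beadCount e 1 emptyPartition L + 1 := by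
  have hset : (threeTwoOne 0 b c).betaSet ∩ {z : ℤ | L ≤ z ∧ (z : ZMod e) = 1} =
      insert 1 (emptyPartition.betaSet ∩ {z : ℤ | L ≤ z ∧ (z : ZMod e) = 1}) := by
    ext z
    simp only [betaSet_threeTwoOne, betaSet_emptyPartition, Set.mem_inter_iff,
      Set.mem_insert_iff, Set.mem_ofPred_eq]
    constructor
    · rintro ⟨⟨hz2, -, -⟩, hLz, hz⟩
      obtain rfl | hz2 := eq_or_ne z 2
      · exact absurd (by exact_mod_cast hz) h2
      · obtain rfl | hz0 := (by omega : z = 1 ∨ z ≤ 0)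
        exacts [.inl rfl, .inr ⟨hz0, hLz, hz⟩]
    · intro hz
      obtain ⟨hz1, hLz, hz⟩ : z ≤ 1 ∧ L ≤ z ∧ (z : ZMod e) = 1 := by
        rcases hz with rfl | ⟨hz0, hLz, hz⟩
        exacts [⟨le_rfl, hL, Int.cast_one⟩, ⟨by omega, hLz, hz⟩]
      exact ⟨⟨by omega, fun h => hb (h ▸ hz), fun h => hc (h ▸ hz)⟩, hLz, hz⟩
  have hfin : (emptyPartition.betaSet ∩ {z : ℤ | L ≤ z ∧ (z : ZMod e) = 1}).Finite :=
    (emptyPartition.finite_betaSet_inter_Ici L).subset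
      (Set.inter_subset_inter_right _ fun z hz => hz.1)
  rw [beadCount, beadCount, hset,
    Set.ncard_insert_of_notMem (fun h => by simpa [betaSet_emptyPartition] using h.1) hfin]

theorem natCast_zmod_eq_one_iff {e : ℕ} (he : 2 ≤ e) (n : ℕ) :
    (n : ZMod e) = 1 ↔ n % e = 1 := by
  rw [← Nat.cast_one, ZMod.natCast_eq_natCast_iff', Nat.mod_eq_of_lt he]

theorem mod_eq_zero_or_one_of_reflTransGen_removeHook {e s j : ℕ} (he : 2 ≤ e)
    (hj : j ≤ e * s)
    (h : Relation.ReflTransGen (RemoveHook e)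
      (threeTwoOne 0 j (2 * (e * s) - 2 * j)) emptyPartition) :
    j % e = 0 ∨ j % e = 1 := by
  by_contra! hj01
  have h2 : (2 : ZMod e) ≠ 1 := fun h2 => by
    have : ((1 : ℕ) : ZMod e) = 0 := by push_cast; linear_combination h2
    have := Nat.le_of_dvd one_pos ((ZMod.natCast_eq_zero_iff 1 e).1 this)
    omega
  have hb : ((2 - j : ℤ) : ZMod e) ≠ 1 := fun hb =>
    hj01.2 <| (natCast_zmod_eq_one_iff he j).1 <| by push_cast at hb; linear_combination -hb
  have hc : ((1 - j - (2 * (e * s) - 2 * j : ℕ) : ℤ) : ZMod e) ≠ 1 := fun hc => by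
    push_cast [Nat.cast_sub (by omega : 2 * j ≤ 2 * (e * s)), ZMod.natCast_self] at hc
    exact hj01.1 <| Nat.mod_eq_zero_of_dvd <| (ZMod.natCast_eq_zero_iff j e).1 <| by
      linear_combination hc
  obtain ⟨L, hcount, hL⟩ := ((beadCount_eventuallyEq_of_reflTransGen h 1).and
    (Filter.eventually_le_atBot 1)).exists
  rw [beadCount_one_threeTwoOne hL h2 hb hc] at hcount
  omega

theorem reflTransGen_removeHook_emptyPartition {e s j : ℕ} (he : 2 ≤ e) (hj : j ≤ e * s)
    (h : j % e = 0 ∨ j % e = 1) :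
    Relation.ReflTransGen (RemoveHook e)
      (threeTwoOne 0 j (2 * (e * s) - 2 * j)) emptyPartition := by
  have he0 : 0 < e := by omega
  obtain ⟨k, hjk⟩ : ∃ k, j = j % e + e * k := ⟨j / e, (Nat.mod_add_div j e).symm⟩
  rcases h with h0 | h1
  · obtain ⟨l, rfl⟩ : ∃ l, s = k + l :=
      Nat.exists_eq_add_of_le (Nat.le_of_mul_le_mul_left (by omega) he0)
    rw [← threeTwoOne_zero_zero_zero]
    convert reflTransGen_removeHook_threeTwoOne he0 0 0 k (2 * l) using 2
    · omega
    rw [show 2 * (e * (k + l)) = 2 * (e * k) + e * (2 * l) by ring]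
    omega
  · obtain ⟨l, rfl⟩ : ∃ l, s = k + 1 + l :=
      Nat.exists_eq_add_of_le (Nat.lt_of_mul_lt_mul_left (by omega : e * k < e * s))
    have hlast := removeHook_threeTwoOne_one (e - 2)
    rw [Nat.sub_add_cancel he] at hlast
    refine .tail ?_ hlast
    convert reflTransGen_removeHook_threeTwoOne he0 1 (e - 2) k (2 * l + 1) using 2
    · omega
    · rw [show 2 * (e * (k + 1 + l)) = 2 * (e * k) + e * (2 * l + 1) + e by ring]
      omega

theorem ecore_two_column_empty_iff_general
    (e m : ℕ) (he3 : 3 ≤ e) (hem : e ∣ m)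
    (j : ℕ) (hj : j ≤ m) :
    HasECore e (threeTwoOne 0 j (2 * m - 2 * j)) emptyPartition ↔
      (j % e = 0 ∨ j % e = 1) := by
  obtain ⟨s, rfl⟩ := hem
  have he2 : 2 ≤ e := by omega
  exact ⟨fun h => mod_eq_zero_or_one_of_reflTransGen_removeHook he2 hj h.1,
    fun h => ⟨reflTransGen_removeHook_emptyPartition he2 hj h, isECore_emptyPartition e⟩⟩

/-- For `e ≥ 3` odd and `m` a positive multiple of `e`, and `0 ≤ j ≤ m`,
the `e`-core of `2^j 1^{2m-2j}` is the empty partition iff `j ≡ 0` or `1 (mod e)`. -/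
theorem ecore_two_column_empty_iff
    (e m : ℕ) (he : Odd e) (he3 : 3 ≤ e) (hm : 0 < m) (hem : e ∣ m)
    (j : ℕ) (hj : j ≤ m) :
    HasECore e (threeTwoOne 0 j (2 * m - 2 * j)) emptyPartition ↔
      (j % e = 0 ∨ j % e = 1) :=
  ecore_two_column_empty_iff_general e m he3 hem j hj

end GUnBranching
end
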